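/- arXiv:2408.04705 — 5 statements merged into one kernel-verified Lean document; each statement's English description precedes it below -/
import Mathlib

section
/- Let n : O → ℕ give the number of activated flows traversing each overlay link, and for e ∈ E let t_e := ∑_{o : e ∈ p(o)} n(o); for F ⊆ O let t_F := ∑_{o ∈ F} n(o). Suppose every underlay link e ∈ E satisfies t_e ≥ 1. Then the minimum over nonempty categories of the ratio of category capacity to category flow count equals the minimum over underlay links of the ratio of link capacity to link flow count: min_{F nonempty category} C_F / t_F = min_{e ∈ E} C_e / t_e. -/
open Finset

/-- `Fcat p e` is the set of overlay links whose routing path traverses underlay link `e`. -/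
def Fcat {O E : Type*} [Fintype O] [DecidableEq E] (p : O → Finset E) (e : E) : Finset O :=
  Finset.univ.filter fun o => e ∈ p o

/-- The category `Γ_F` of underlay links traversed by (the paths of) exactly
the overlay links in `F`. -/
def cat {O E : Type*} [Fintype O] [Fintype E] [DecidableEq O] [DecidableEq E]
    (p : O → Finset E) (F : Finset O) : Finset E :=
  Finset.univ.filter fun e => Fcat p e = F

/-- The category capacity `C_F`: the minimum capacity of the links in the category `Γ_F`
(and `0` if the category is empty). -/
noncomputable def catCap {O E : Type*} [Fintype O] [Fintype E] [DecidableEq O] [DecidableEq E]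
    (p : O → Finset E) (C : E → ℝ) (F : Finset O) : ℝ :=
  if h : (cat p F).Nonempty then (cat p F).inf' h C else 0

/-- if every underlay link carries at least one activated flow
(`t_e = ∑_{o : e ∈ p(o)} n(o) ≥ 1`), then the minimum over nonempty categories of
`C_F / t_F` equals the minimum over underlay links of `C_e / t_e`. -/
theorem min_category_ratio_eq_min_link_ratio {O E : Type*}
    [Fintype O] [Fintype E] [DecidableEq O] [DecidableEq E] [Nonempty E]
    (p : O → Finset E) (C : E → ℝ) (hC : ∀ e, 0 < C e)
    (n : O → ℕ)
    (ht : ∀ e : E, 1 ≤ ∑ o ∈ Fcat p e, n o) :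
    ((Finset.univ : Finset (Finset O)).filter fun F => (cat p F).Nonempty).inf'
        ⟨Fcat p (Classical.arbitrary E), by
          refine Finset.mem_filter.2 ⟨Finset.mem_univ _, ⟨Classical.arbitrary E, ?_⟩⟩
          simp [cat]⟩
        (fun F => catCap p C F / ((∑ o ∈ F, n o : ℕ) : ℝ))
      = Finset.univ.inf' Finset.univ_nonempty
          (fun e => C e / ((∑ o ∈ Fcat p e, n o : ℕ) : ℝ)) := by
  apply le_antisymm
  · apply Finset.le_inf'
    intro e _
    have hF : Fcat p e ∈ (Finset.univ : Finset (Finset O)).filter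
        fun F => (cat p F).Nonempty := by
      refine Finset.mem_filter.2 ⟨Finset.mem_univ _, ⟨e, ?_⟩⟩
      simp [cat]
    refine le_trans (Finset.inf'_le _ hF) ?_
    have hne : (cat p (Fcat p e)).Nonempty := ⟨e, by simp [cat]⟩
    have hcap : catCap p C (Fcat p e) ≤ C e := by
      rw [catCap, dif_pos hne]
      exact Finset.inf'_le _ (by simp [cat])
    have hpos : (0:ℝ) < ((∑ o ∈ Fcat p e, n o : ℕ) : ℝ) := by
      exact_mod_cast lt_of_lt_of_le one_pos (ht e)
    exact (div_le_div_iff_of_pos_right hpos).2 hcap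
  · apply Finset.le_inf'
    intro F hF
    have hne : (cat p F).Nonempty := (Finset.mem_filter.1 hF).2
    obtain ⟨e, he, heq⟩ := Finset.exists_mem_eq_inf' hne C
    have heF : Fcat p e = F := by simpa [cat] using he
    have : catCap p C F = C e := by rw [catCap, dif_pos hne, heq]
    rw [this, ← heF]
    exact Finset.inf'_le _ (Finset.mem_univ e)
end

section
/- For every rate vector r : O → ℝ with r(o) ≥ 0 for all o, the per-link capacity constraints hold if and only if the per-category capacity constraints hold: (∀ e ∈ E, ∑_{o : e ∈ p(o)} r(o) ≤ C_e) if and only if (for every nonempty category F ⊆ O, ∑_{o ∈ F} r(o) ≤ C_F). -/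
open Finset

open Finset

/-- for every nonnegative rate vector, the per-link capacity constraints
hold if and only if the per-category capacity constraints hold. -/
theorem per_link_iff_per_category {O E : Type*}
    [Fintype O] [Fintype E] [DecidableEq O] [DecidableEq E] [Nonempty E]
    (p : O → Finset E) (C : E → ℝ) (hC : ∀ e, 0 < C e)
    (r : O → ℝ) (hr : ∀ o, 0 ≤ r o) :
    (∀ e : E, ∑ o ∈ Fcat p e, r o ≤ C e)
      ↔ (∀ F : Finset O, (cat p F).Nonempty → ∑ o ∈ F, r o ≤ catCap p C F) := by
  constructor
  · intro h F hF
    rw [catCap, dif_pos hF]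
    rw [Finset.le_inf'_iff]
    intro e he
    have : Fcat p e = F := by simpa [cat] using he
    rw [← this]
    exact h e
  · intro h e
    have he : e ∈ cat p (Fcat p e) := by simp [cat]
    have hF : (cat p (Fcat p e)).Nonempty := ⟨e, he⟩
    calc ∑ o ∈ Fcat p e, r o ≤ catCap p C (Fcat p e) := h _ hF
      _ ≤ C e := by rw [catCap, dif_pos hF]; exact Finset.inf'_le _ he
end

section
/- Let S be a finite nonempty set, f : S → ℝ with f(s) > 0 for all s, and g : S → ℝ with g(s) ≥ 0 for all s. Then (i) min_{s ∈ S} f(s)·g(s) equals the infimum over all β ≥ 0 such that {s ∈ S : f(s) ≤ β} is nonempty of the quantity β · min_{s : f(s) ≤ β} g(s), and this infimum is attained (at β* = f(s°) for a minimizer s° of f·g); and (ii) for any pair (β*, s*) with f(s*) ≤ β* that minimizes β · g(s) over all pairs (β, s) with β ≥ 0 and f(s) ≤ β, the element s* also minimizes f(s)·g(s) over S. -/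
open Finset
open scoped Classical

/-- for a finite nonempty set `S`, strictly positive `f` (per-iteration time)
and nonnegative `g` (number of iterations):
(i) `min_{s ∈ S} f s * g s` is the least element (hence the attained infimum) of the set of
values `β * min_{s ∈ S, f s ≤ β} g s` over all `β ≥ 0` for which `{s ∈ S : f s ≤ β}` is
nonempty; and
(ii) any pair `(β*, s*)` with `β* ≥ 0`, `s* ∈ S`, `f s* ≤ β*` minimizing `β * g s` over
all pairs `(β, s)` with `β ≥ 0`, `s ∈ S`, `f s ≤ β` has `s*` minimizing `f s * g s` over `S`. -/
theorem bilevel_decomposition {ι : Type*} (S : Finset ι) (hS : S.Nonempty)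
    (f g : ι → ℝ) (hf : ∀ s ∈ S, 0 < f s) (hg : ∀ s ∈ S, 0 ≤ g s) :
    IsLeast {x : ℝ | ∃ β : ℝ, 0 ≤ β ∧ ∃ h : (S.filter fun s => f s ≤ β).Nonempty,
          x = β * (S.filter fun s => f s ≤ β).inf' h g}
        (S.inf' hS fun s => f s * g s)
    ∧ ∀ β' : ℝ, 0 ≤ β' → ∀ s' ∈ S, f s' ≤ β' →
        (∀ β : ℝ, 0 ≤ β → ∀ s ∈ S, f s ≤ β → β' * g s' ≤ β * g s) →
        ∀ s ∈ S, f s' * g s' ≤ f s * g s := by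

  constructor
  · constructor
    · -- membership: take s₀ minimizing f*g, β = f s₀
      obtain ⟨s₀, hs₀, hmin⟩ := S.exists_mem_eq_inf' hS (fun s => f s * g s)
      refine ⟨f s₀, (hf s₀ hs₀).le, ⟨s₀, Finset.mem_filter.2 ⟨hs₀, le_refl _⟩⟩, ?_⟩
      have hFne : (S.filter fun s => f s ≤ f s₀).Nonempty := ⟨s₀, Finset.mem_filter.2 ⟨hs₀, le_refl _⟩⟩
      obtain ⟨t, ht, hgt⟩ := Finset.exists_mem_eq_inf' hFne g
      obtain ⟨htS, htf⟩ := Finset.mem_filter.1 ht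
      have h1 : f s₀ * g t ≥ f t * g t :=
        mul_le_mul_of_nonneg_right htf (hg t htS)
      have h2 : f t * g t ≥ S.inf' hS fun s => f s * g s :=
        Finset.inf'_le (fun s => f s * g s) htS
      have hg0 : g t ≤ g s₀ := by
        rw [← hgt]; exact Finset.inf'_le g (Finset.mem_filter.2 ⟨hs₀, le_refl (f s₀)⟩)
      have h3 : f s₀ * g t ≤ f s₀ * g s₀ :=
        mul_le_mul_of_nonneg_left hg0 (hf s₀ hs₀).le
      rw [hmin, hgt]
      linarith
    · rintro x ⟨β, hβ, hne, rfl⟩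
      obtain ⟨t, ht, hgt⟩ := Finset.exists_mem_eq_inf' hne g
      obtain ⟨htS, htf⟩ := Finset.mem_filter.1 ht
      have h2 : (S.inf' hS fun s => f s * g s) ≤ f t * g t :=
        Finset.inf'_le (fun s => f s * g s) htS
      have h1 : f t * g t ≤ β * g t :=
        mul_le_mul_of_nonneg_right htf (hg t htS)
      rw [hgt]
      linarith
  · intro β' hβ' s' hs' hfs' hopt s hs
    have h1 : f s' * g s' ≤ β' * g s' :=
      mul_le_mul_of_nonneg_right hfs' (hg s' hs')
    have h2 := hopt (f s) (hf s hs).le s hs le_rfl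
    linarith
end

section
/- Suppose the nonnegative edge weights α satisfy max_{i ∈ V} ∑_{j : {i,j} ∈ Ẽ} α_{ij} + m · max_{{i,j} ∈ Ẽ} α_{ij} ≤ 1. Then for every subset E_a ⊆ Ẽ, writing λ_1 ≤ λ_2 ≤ … ≤ λ_m for the eigenvalues of the weighted Laplacian L(E_a) listed in nondecreasing order, one has max(1 − λ_2, λ_m − 1) = 1 − λ_2. In particular, minimizing max(1 − λ_2(L(E_a)), λ_m(L(E_a)) − 1) over subsets E_a ⊆ Ẽ is equivalent to maximizing the algebraic connectivity λ_2(L(E_a)). -/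
open Matrix Finset

/-- The Laplacian contribution of a single (unit-weight) edge `e = (i, j)`:
`(eᵢ − eⱼ)(eᵢ − eⱼ)ᵀ`. -/
noncomputable def edgeLap {m : ℕ} (e : Fin m × Fin m) : Matrix (Fin m) (Fin m) ℝ :=
  Matrix.vecMulVec (Pi.single e.1 1 - Pi.single e.2 1) (Pi.single e.1 1 - Pi.single e.2 1)

/-- The weighted Laplacian `L(E_a) = ∑_{{i,j} ∈ E_a} α_{ij} (eᵢ − eⱼ)(eᵢ − eⱼ)ᵀ`. -/
noncomputable def lap {m : ℕ} (α : Fin m × Fin m → ℝ) (Ea : Finset (Fin m × Fin m)) :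
    Matrix (Fin m) (Fin m) ℝ :=
  ∑ e ∈ Ea, α e • edgeLap e

/-- The weighted degree of vertex `i`: `∑_{j : {i,j} ∈ Ẽ} α_{ij}`. -/
def deg {m : ℕ} (α : Fin m × Fin m → ℝ) (Et : Finset (Fin m × Fin m)) (i : Fin m) : ℝ :=
  ∑ e ∈ Et, if e.1 = i ∨ e.2 = i then α e else 0

lemma dot_vecMulVec {m : ℕ} (w x : Fin m → ℝ) :
    x ⬝ᵥ (Matrix.vecMulVec w w *ᵥ x) = (w ⬝ᵥ x)^2 := by
  simp only [Matrix.mulVec, dotProduct, vecMulVec_apply]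
  rw [sq, Finset.sum_mul_sum]
  simp only [Finset.mul_sum]
  exact Finset.sum_congr rfl fun i _ => Finset.sum_congr rfl fun j _ => by ring

lemma edge_quad {m : ℕ} (e : Fin m × Fin m) (x : Fin m → ℝ) :
    x ⬝ᵥ (edgeLap e *ᵥ x) = (x e.1 - x e.2)^2 := by
  rw [edgeLap, dot_vecMulVec]
  congr 1
  simp [sub_dotProduct, single_dotProduct]

lemma quad {m : ℕ} (α : Fin m × Fin m → ℝ) (Ea : Finset (Fin m × Fin m)) (x : Fin m → ℝ) :
    x ⬝ᵥ ((lap α Ea) *ᵥ x) = ∑ e ∈ Ea, α e * (x e.1 - x e.2)^2 := by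
  have h1 : ∀ i, ((lap α Ea) *ᵥ x) i = ∑ e ∈ Ea, α e * ((edgeLap e *ᵥ x) i) := by
    intro i
    simp only [lap, Matrix.mulVec, dotProduct, Matrix.sum_apply, Matrix.smul_apply,
      smul_eq_mul, Finset.sum_mul, Finset.mul_sum]
    rw [Finset.sum_comm]
    exact Finset.sum_congr rfl fun e _ => Finset.sum_congr rfl fun j _ => by ring
  calc x ⬝ᵥ ((lap α Ea) *ᵥ x) = ∑ i, x i * ∑ e ∈ Ea, α e * ((edgeLap e *ᵥ x) i) := by
        simp only [dotProduct]; exact Finset.sum_congr rfl fun i _ => by rw [h1]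
    _ = ∑ e ∈ Ea, α e * (x ⬝ᵥ (edgeLap e *ᵥ x)) := by
        simp only [dotProduct, Finset.mul_sum]
        rw [Finset.sum_comm]
        exact Finset.sum_congr rfl fun e _ => Finset.sum_congr rfl fun i _ => by ring
    _ = ∑ e ∈ Ea, α e * (x e.1 - x e.2)^2 :=
        Finset.sum_congr rfl fun e _ => by rw [edge_quad]

/-- The Rayleigh quotient bound. -/
lemma rayleigh {m : ℕ} (Et : Finset (Fin m × Fin m))
    (hloop : ∀ e ∈ Et, e.1 ≠ e.2) (hord : ∀ e ∈ Et, (e.2, e.1) ∉ Et)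
    (α : Fin m × Fin m → ℝ) (hα : ∀ e ∈ Et, 0 ≤ α e)
    {Ea : Finset (Fin m × Fin m)} (hEa : Ea ⊆ Et) (x : Fin m → ℝ) :
    x ⬝ᵥ ((lap α Ea) *ᵥ x)
      ≤ (Finset.fold max 0 (deg α Et) Finset.univ + m * Finset.fold max 0 α Et)
        * ∑ i, x i ^ 2 := by
  classical
  set D := Finset.fold max 0 (deg α Et) Finset.univ with hD
  set M := Finset.fold max 0 α Et with hM
  have hM0 : (0:ℝ) ≤ M := (Finset.le_fold_max _).mpr (Or.inl le_rfl)
  have hMe : ∀ e ∈ Et, α e ≤ M := fun e he => (Finset.le_fold_max _).mpr (Or.inr ⟨e, he, le_rfl⟩)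
  have hDi : ∀ i, deg α Et i ≤ D := fun i =>
    (Finset.le_fold_max _).mpr (Or.inr ⟨i, mem_univ i, le_rfl⟩)
  have hdegmono : ∀ i, deg α Ea i ≤ deg α Et i := by
    intro i
    refine Finset.sum_le_sum_of_subset_of_nonneg hEa fun e he _ => ?_
    by_cases h : e.1 = i ∨ e.2 = i <;> simp [h, hα e he]
  rw [quad]
  -- per-edge bound
  have step1 : ∑ e ∈ Ea, α e * (x e.1 - x e.2)^2
      ≤ (∑ e ∈ Ea, α e * (x e.1 ^ 2 + x e.2 ^ 2))
        + M * ∑ e ∈ Ea, 2 * (|x e.1| * |x e.2|) := by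
    rw [Finset.mul_sum, ← Finset.sum_add_distrib]
    refine Finset.sum_le_sum fun e he => ?_
    have h1 : 0 ≤ α e := hα e (hEa he)
    have h2 : α e ≤ M := hMe e (hEa he)
    have h3 : -(|x e.1| * |x e.2|) ≤ x e.1 * x e.2 := by
      rw [← abs_mul]; exact neg_abs_le _
    have t1 : -(α e * (x e.1 * x e.2)) ≤ α e * (|x e.1| * |x e.2|) := by
      have := mul_le_mul_of_nonneg_left h3 h1; linarith
    have t2 : α e * (|x e.1| * |x e.2|) ≤ M * (|x e.1| * |x e.2|) :=
      mul_le_mul_of_nonneg_right h2 (by positivity)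
    nlinarith [t1, t2]
  -- first sum
  have stepA : ∑ e ∈ Ea, α e * (x e.1 ^ 2 + x e.2 ^ 2) ≤ D * ∑ i, x i ^ 2 := by
    have hA : ∑ e ∈ Ea, α e * (x e.1 ^ 2 + x e.2 ^ 2) = ∑ i, deg α Ea i * x i ^ 2 := by
      unfold deg
      simp only [Finset.sum_mul]
      rw [Finset.sum_comm]
      refine Finset.sum_congr rfl fun e he => ?_
      have hne : e.1 ≠ e.2 := hloop e (hEa he)
      have : ∀ i : Fin m, (if e.1 = i ∨ e.2 = i then α e else 0) * x i ^ 2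
          = (if e.1 = i then α e * x i ^ 2 else 0) + (if e.2 = i then α e * x i ^ 2 else 0) := by
        intro i
        by_cases h1 : e.1 = i <;> by_cases h2 : e.2 = i <;>
          simp_all
      rw [Finset.sum_congr rfl fun i _ => this i, Finset.sum_add_distrib,
        Finset.sum_ite_eq, Finset.sum_ite_eq]
      simp [mul_add]
    rw [hA, Finset.mul_sum]
    refine Finset.sum_le_sum fun i _ => ?_
    exact mul_le_mul_of_nonneg_right (le_trans (hdegmono i) (hDi i)) (sq_nonneg _)
  -- second sum
  have stepB : ∑ e ∈ Ea, 2 * (|x e.1| * |x e.2|) ≤ m * ∑ i, x i ^ 2 := by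
    set g : Fin m × Fin m → ℝ := fun p => |x p.1| * |x p.2| with hg
    have hswap : ∑ e ∈ Ea.image Prod.swap, g e = ∑ e ∈ Ea, g e := by
      rw [Finset.sum_image (fun a _ b _ h => Prod.swap_injective h)]
      exact Finset.sum_congr rfl fun e _ => by simp [hg, mul_comm]
    have hdisj : Disjoint Ea (Ea.image Prod.swap) := by
      rw [Finset.disjoint_left]
      intro e he hei
      obtain ⟨f, hf, hfe⟩ := Finset.mem_image.mp hei
      exact hord f (hEa hf) (by rw [show (f.2, f.1) = Prod.swap f from rfl, hfe]; exact hEa he)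
    have hsum2 : ∑ e ∈ Ea, 2 * g e = ∑ e ∈ Ea ∪ Ea.image Prod.swap, g e := by
      rw [Finset.sum_union hdisj, hswap]; rw [← Finset.sum_add_distrib]
      exact Finset.sum_congr rfl fun e _ => by ring
    have hle : ∑ e ∈ Ea ∪ Ea.image Prod.swap, g e ≤ ∑ e : Fin m × Fin m, g e := by
      refine Finset.sum_le_sum_of_subset_of_nonneg (Finset.subset_univ _) fun e _ _ => ?_
      exact mul_nonneg (abs_nonneg _) (abs_nonneg _)
    have huniv : ∑ e : Fin m × Fin m, g e = (∑ i, |x i|) ^ 2 := by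
      rw [sq, Finset.sum_mul_sum, ← Finset.univ_product_univ, Finset.sum_product]
    have hcs : (∑ i, |x i|) ^ 2 ≤ (m : ℝ) * ∑ i, x i ^ 2 := by
      have := sq_sum_le_card_mul_sum_sq (s := (univ : Finset (Fin m)))
        (f := fun i => |x i|)
      simp only [Finset.card_univ, Fintype.card_fin, sq_abs] at this
      exact_mod_cast this
    calc ∑ e ∈ Ea, 2 * (|x e.1| * |x e.2|) = ∑ e ∈ Ea ∪ Ea.image Prod.swap, g e := hsum2
      _ ≤ (∑ i, |x i|) ^ 2 := le_trans hle (le_of_eq huniv)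
      _ ≤ (m:ℝ) * ∑ i, x i ^ 2 := hcs
  have hN : (0:ℝ) ≤ ∑ i, x i ^ 2 := Finset.sum_nonneg fun i _ => sq_nonneg _
  calc ∑ e ∈ Ea, α e * (x e.1 - x e.2)^2
      ≤ (∑ e ∈ Ea, α e * (x e.1 ^ 2 + x e.2 ^ 2))
        + M * ∑ e ∈ Ea, 2 * (|x e.1| * |x e.2|) := step1
    _ ≤ D * ∑ i, x i ^ 2 + M * ((m:ℝ) * ∑ i, x i ^ 2) :=
        add_le_add stepA (mul_le_mul_of_nonneg_left stepB hM0)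
    _ = (D + m * M) * ∑ i, x i ^ 2 := by ring


lemma eig_le_one {m : ℕ} {A : Matrix (Fin m) (Fin m) ℝ} (hH : A.IsHermitian)
    (hb : ∀ x : Fin m → ℝ, x ⬝ᵥ (A *ᵥ x) ≤ ∑ i, x i ^ 2) (i : Fin m) :
    hH.eigenvalues i ≤ 1 := by
  set v : Fin m → ℝ := ⇑(hH.eigenvectorBasis i) with hv
  have hmv : A *ᵥ v = hH.eigenvalues i • v := hH.mulVec_eigenvectorBasis i
  have hvne : ∃ j, v j ≠ 0 := by
    by_contra h
    push_neg at h
    exact hH.eigenvectorBasis.orthonormal.ne_zero i (by ext j; exact h j)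
  obtain ⟨j, hj⟩ := hvne
  have hN : (0:ℝ) < ∑ k, v k ^ 2 :=
    Finset.sum_pos' (fun k _ => sq_nonneg _) ⟨j, Finset.mem_univ j, by positivity⟩
  have hquad : v ⬝ᵥ (A *ᵥ v) = hH.eigenvalues i * ∑ k, v k ^ 2 := by
    rw [hmv, dotProduct_smul, smul_eq_mul]
    congr 1
    simp [dotProduct, sq]
  have := hb v
  rw [hquad] at this
  nlinarith [hN]

/-- if the nonnegative edge weights satisfy
`max_i ∑_{j : {i,j} ∈ Ẽ} α_{ij} + m · max_{{i,j} ∈ Ẽ} α_{ij} ≤ 1` (maxima over the empty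
set being 0), then for every `E_a ⊆ Ẽ`, writing `lam 0 ≤ lam 1 ≤ … ≤ lam (m-1)` for the
eigenvalues of `L(E_a)` in nondecreasing order, one has
`max (1 − λ₂) (λ_m − 1) = 1 − λ₂` — so minimizing `max (1 − λ₂) (λ_m − 1)` is equivalent
to maximizing the algebraic connectivity `λ₂`.
(Edges are encoded as ordered pairs, each unordered pair `{i,j}` with `i ≠ j` appearing
under exactly one orientation.) -/
theorem minimize_rho_eq_maximize_connectivity {m : ℕ} (hm : 2 ≤ m)
    (Et : Finset (Fin m × Fin m))
    (hloop : ∀ e ∈ Et, e.1 ≠ e.2)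
    (hord : ∀ e ∈ Et, (e.2, e.1) ∉ Et)
    (α : Fin m × Fin m → ℝ) (hα : ∀ e ∈ Et, 0 ≤ α e)
    (hcond : Finset.fold max 0 (deg α Et) Finset.univ
        + m * Finset.fold max 0 α Et ≤ 1) :
    ∀ Ea ⊆ Et, ∀ lam : Fin m → ℝ, Monotone lam →
      (∃ (hH : (lap α Ea).IsHermitian) (σ : Equiv.Perm (Fin m)),
          lam = hH.eigenvalues ∘ σ) →
      max (1 - lam ⟨1, by omega⟩) (lam ⟨m - 1, by omega⟩ - 1)
        = 1 - lam ⟨1, by omega⟩ := by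
  intro Ea hEa lam hmono ⟨hH, σ, hlam⟩
  have hb : ∀ x : Fin m → ℝ, x ⬝ᵥ ((lap α Ea) *ᵥ x) ≤ ∑ i, x i ^ 2 := by
    intro x
    calc x ⬝ᵥ ((lap α Ea) *ᵥ x)
        ≤ (Finset.fold max 0 (deg α Et) Finset.univ + m * Finset.fold max 0 α Et)
          * ∑ i, x i ^ 2 := rayleigh Et hloop hord α hα hEa x
      _ ≤ 1 * ∑ i, x i ^ 2 :=
          mul_le_mul_of_nonneg_right hcond (Finset.sum_nonneg fun i _ => sq_nonneg _)
      _ = ∑ i, x i ^ 2 := one_mul _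
  have htop : lam ⟨m - 1, by omega⟩ ≤ 1 := by
    rw [hlam]; exact eig_le_one hH hb _
  have h12 : lam ⟨1, by omega⟩ ≤ lam ⟨m - 1, by omega⟩ :=
    hmono (by simp [Fin.mk_le_mk]; omega)
  exact max_eq_left (by linarith)
end

section
/- Let K be a finite nonempty index set, w : K → ℝ with w_k ≥ 0 and ∑_k w_k = 1, and for each k let W_k be a real m×m symmetric matrix with W_k · 1 = 1. Then ‖∑_{k ∈ K} w_k (W_kᵀ W_k) − J‖ ≤ ∑_{k ∈ K} w_k ‖W_k − J‖², where J is the m×m matrix with all entries 1/m and ‖·‖ is the spectral norm. -/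
set_option synthInstance.maxHeartbeats 1000000


open Matrix Finset

/-- The m×m matrix with all entries equal to 1/m. -/
noncomputable def Jmat (m : ℕ) : Matrix (Fin m) (Fin m) ℝ :=
  Matrix.of fun _ _ => (1 : ℝ) / m

/-- The spectral norm (ℓ2 operator norm on Euclidean space) of a real square matrix. -/
noncomputable def specNorm {m : ℕ} (M : Matrix (Fin m) (Fin m) ℝ) : ℝ :=
  ‖(Matrix.toEuclideanCLM (𝕜 := ℝ) M :
      EuclideanSpace ℝ (Fin m) →L[ℝ] EuclideanSpace ℝ (Fin m))‖

lemma specNorm_mul_self_le {m : ℕ} (M : Matrix (Fin m) (Fin m) ℝ) :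
    specNorm (M * M) ≤ specNorm M ^ 2 := by
  unfold specNorm
  rw [_root_.map_mul, sq]
  exact norm_mul_le _ _

/-- for convex weights `w` over a finite nonempty index set and symmetric
matrices `W k` with rows summing to one, `‖∑ k, w k (W kᵀ W k) − J‖ ≤ ∑ k, w k ‖W k − J‖²`. -/
theorem specNorm_convex_combination_le {m : ℕ} (hm : 1 ≤ m)
    {K : Type*} [Fintype K] [Nonempty K]
    (w : K → ℝ) (hw : ∀ k, 0 ≤ w k) (hw1 : ∑ k, w k = 1)
    (W : K → Matrix (Fin m) (Fin m) ℝ)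
    (hsym : ∀ k, (W k)ᵀ = W k)
    (hrow : ∀ k, (W k) *ᵥ (fun _ => (1 : ℝ)) = fun _ => (1 : ℝ)) :
    specNorm ((∑ k, w k • ((W k)ᵀ * W k)) - Jmat m)
      ≤ ∑ k, w k * specNorm (W k - Jmat m) ^ 2 := by
  have hmpos : (0 : ℝ) < m := by exact_mod_cast hm
  have hrowsum : ∀ k i, ∑ j, W k i j = 1 := by
    intro k i
    have := congrFun (hrow k) i
    simpa [Matrix.mulVec, dotProduct] using this
  have hcolsum : ∀ k j, ∑ i, W k i j = 1 := by
    intro k j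
    have := hrowsum k j
    calc ∑ i, W k i j = ∑ i, (W k)ᵀ j i := by simp [Matrix.transpose_apply]
    _ = ∑ i, W k j i := by rw [hsym k]
    _ = 1 := hrowsum k j
  have hJJ : Jmat m * Jmat m = Jmat m := by
    ext i j
    simp only [Jmat, Matrix.mul_apply, Matrix.of_apply, Finset.sum_const,
      Finset.card_univ, Fintype.card_fin, nsmul_eq_mul]
    field_simp
  have hWJ : ∀ k, W k * Jmat m = Jmat m := by
    intro k
    ext i j
    simp only [Jmat, Matrix.mul_apply, Matrix.of_apply]
    simp_rw [mul_one_div]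
    rw [← Finset.sum_div, hrowsum k i]
  have hJW : ∀ k, Jmat m * W k = Jmat m := by
    intro k
    ext i j
    simp only [Jmat, Matrix.mul_apply, Matrix.of_apply]
    simp_rw [mul_comm ((1:ℝ)/m), mul_one_div]
    rw [← Finset.sum_div, hcolsum k j]
  have key : ∀ k, (W k - Jmat m) * (W k - Jmat m) = W k * W k - Jmat m := by
    intro k
    rw [Matrix.sub_mul, Matrix.mul_sub, Matrix.mul_sub, hWJ k, hJW k, hJJ]
    abel
  have hEq : (∑ k, w k • ((W k)ᵀ * W k)) - Jmat m
      = ∑ k, w k • ((W k - Jmat m) * (W k - Jmat m)) := by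
    have : ∑ k, w k • (Jmat m) = Jmat m := by
      rw [← Finset.sum_smul, hw1, one_smul]
    calc (∑ k, w k • ((W k)ᵀ * W k)) - Jmat m
        = (∑ k, w k • (W k * W k)) - ∑ k, w k • (Jmat m) := by
          rw [this]; congr 1; refine Finset.sum_congr rfl fun k _ => ?_; rw [hsym k]
      _ = ∑ k, (w k • (W k * W k) - w k • (Jmat m)) := by rw [Finset.sum_sub_distrib]
      _ = ∑ k, w k • ((W k - Jmat m) * (W k - Jmat m)) := by
          refine Finset.sum_congr rfl fun k _ => ?_
          rw [key k, smul_sub]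
  rw [hEq]
  unfold specNorm
  rw [map_sum]
  refine le_trans (norm_sum_le _ _) (Finset.sum_le_sum fun k _ => ?_)
  rw [_root_.map_smul]
  have h1 : ‖w k • (Matrix.toEuclideanCLM (𝕜 := ℝ) ((W k - Jmat m) * (W k - Jmat m)) :
      EuclideanSpace ℝ (Fin m) →L[ℝ] EuclideanSpace ℝ (Fin m))‖
      = |w k| * specNorm ((W k - Jmat m) * (W k - Jmat m)) := by
    rw [show |w k| = ‖w k‖ from rfl]
    exact norm_smul (w k) (Matrix.toEuclideanCLM (𝕜 := ℝ) ((W k - Jmat m) * (W k - Jmat m)) :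
      EuclideanSpace ℝ (Fin m) →L[ℝ] EuclideanSpace ℝ (Fin m))
  rw [h1, abs_of_nonneg (hw k)]
  exact mul_le_mul_of_nonneg_left (specNorm_mul_self_le _) (hw k)
end
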